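/- Let H be a Kreĭn space and S a quasi-pseudo-regular subspace, i.e. S is an operator range and S = R ⊕ N with R regular, N neutral, R ⊥ N. Then S + S^⊥ is closed. -/

import Mathlib

/-!
As `N` is neutral and `[R, N] = 0`, the polarization identity gives `N ⊆ S^⊥`, so
`S + S^⊥ = R + S^⊥`. A regular `R` and its closed companion `R^⊥` are topological complements
(closed graph theorem), and since `S^⊥ ⊆ R^⊥`, the sum `R + S^⊥` is the preimage of the closed
subspace `S^⊥` under the bounded projection onto `R^⊥` along `R`.
-/

open ContinuousLinearMap

noncomputable section

namespace KreinPaper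

variable {H : Type*} [NormedAddCommGroup H] [InnerProductSpace ℂ H] [CompleteSpace H]

/-- The indefinite orthogonal companion of a subspace, with respect to the
indefinite inner product `[x, y] = ⟪J x, y⟫`. -/
def kOrth (J : H →L[ℂ] H) (S : Submodule ℂ H) : Submodule ℂ H where
  carrier := {y | ∀ x ∈ S, (inner ℂ (J x) y : ℂ) = 0}
  add_mem' := by
    intro a b ha hb x hx
    simp only [Set.mem_setOf_eq] at ha hb ⊢
    rw [inner_add_right, ha x hx, hb x hx, add_zero]
  zero_mem' := by
    intro x _
    exact inner_zero_right _
  smul_mem' := by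
    intro c a ha x hx
    simp only [Set.mem_setOf_eq] at ha ⊢
    rw [inner_smul_right, ha x hx, mul_zero]

/-- A regular subspace: closed, with `R ∩ R^⊥ = 0` and `R + R^⊥ = H`. -/
def IsRegular (J : H →L[ℂ] H) (R : Submodule ℂ H) : Prop :=
  IsClosed (R : Set H) ∧ R ⊓ kOrth J R = ⊥ ∧ R ⊔ kOrth J R = ⊤

/-- A neutral subspace: the indefinite inner product vanishes on it. -/
def IsNeutral (J : H →L[ℂ] H) (N : Submodule ℂ H) : Prop :=
  ∀ n ∈ N, (inner ℂ (J n) n : ℂ) = 0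

/-- Two subspaces are orthogonal in the indefinite inner product. -/
def AreKOrth (J : H →L[ℂ] H) (A B : Submodule ℂ H) : Prop :=
  ∀ a ∈ A, ∀ b ∈ B, (inner ℂ (J a) b : ℂ) = 0

/-- An operator range: the range of a bounded operator (equivalently, of a
bounded operator on `H` itself). -/
def IsOpRange (S : Submodule ℂ H) : Prop :=
  ∃ T : H →L[ℂ] H, LinearMap.range (T : H →ₗ[ℂ] H) = S

/-- Quasi-pseudo-regular subspace: an operator range which is the orthogonal
sum of a regular subspace and a neutral subspace. -/
def IsQpr (J : H →L[ℂ] H) (S : Submodule ℂ H) : Prop :=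
  IsOpRange S ∧ ∃ R N : Submodule ℂ H,
    IsRegular J R ∧ IsNeutral J N ∧ AreKOrth J R N ∧ S = R ⊔ N

/-- Pseudo-regular subspace: a closed subspace which is the orthogonal
sum of a regular subspace and a neutral subspace. -/
def IsPseudoRegular (J : H →L[ℂ] H) (S : Submodule ℂ H) : Prop :=
  IsClosed (S : Set H) ∧ ∃ R N : Submodule ℂ H,
    IsRegular J R ∧ IsNeutral J N ∧ AreKOrth J R N ∧ S = R ⊔ N

/-- A fundamental symmetry: a selfadjoint involution. -/
def IsFundSym (J : H →L[ℂ] H) : Prop :=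
  IsSelfAdjoint J ∧ J ∘L J = ContinuousLinearMap.id ℂ H

/-- The indefinite (Kreĭn space) adjoint `A* = J A† J`. -/
def kAdj (J : H →L[ℂ] H) (A : H →L[ℂ] H) : H →L[ℂ] H :=
  J ∘L (ContinuousLinearMap.adjoint A) ∘L J

end KreinPaper

namespace KreinPaper

variable {H : Type*} [NormedAddCommGroup H] [InnerProductSpace ℂ H]

theorem _root_.Submodule.IsTopCompl.isClosed_sup_of_le {R M : Type*} [Ring R] [AddCommGroup M]
    [Module R M] [TopologicalSpace M] [IsTopologicalAddGroup M] {p q K : Submodule R M}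
    (h : p.IsTopCompl q) (hK : IsClosed (K : Set M)) (hKp : K ≤ p) :
    IsClosed ((q ⊔ K : Submodule R M) : Set M) := by
  suffices hsup : ((q ⊔ K : Submodule R M) : Set M) = p.projectionL q h ⁻¹' K by
    rw [hsup]
    exact hK.preimage (p.projectionL q h).continuous
  ext x
  constructor
  · intro hx
    obtain ⟨r, hr, k, hk, rfl⟩ := Submodule.mem_sup.mp hx
    rw [Set.mem_preimage, map_add, (Submodule.projectionL_apply_eq_zero_iff h).mpr hr,
      (Submodule.projectionL_eq_self_iff h k).mpr (hKp hk), zero_add]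
    exact hk
  · intro hx
    have hqx : x - p.projectionL q h x ∈ q := by
      rw [← Submodule.projectionL_eq_self_sub_projectionL h]
      exact Submodule.projectionL_apply_mem _ x
    rw [SetLike.mem_coe, ← sub_add_cancel x (p.projectionL q h x)]
    exact Submodule.add_mem_sup hqx hx

lemma kOrth_eq_orthogonal_map (J : H →L[ℂ] H) (S : Submodule ℂ H) :
    kOrth J S = (S.map (J : H →ₗ[ℂ] H))ᗮ := by
  ext y
  simp [kOrth, Submodule.mem_orthogonal]

lemma isClosed_kOrth (J : H →L[ℂ] H) (S : Submodule ℂ H) : IsClosed (kOrth J S : Set H) := by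
  rw [kOrth_eq_orthogonal_map]
  exact Submodule.isClosed_orthogonal _

lemma kOrth_le (J : H →L[ℂ] H) {S T : Submodule ℂ H} (h : S ≤ T) : kOrth J T ≤ kOrth J S :=
  fun _ hy x hx => hy x (h hx)

lemma IsNeutral.inner_eq_zero {J : H →L[ℂ] H} {N : Submodule ℂ H} (hN : IsNeutral J N)
    {m n : H} (hm : m ∈ N) (hn : n ∈ N) : inner ℂ (J m) n = 0 := by
  rw [← coe_coe J, inner_map_polarization]
  simp only [coe_coe, hN _ (N.add_mem hn hm), hN _ (N.sub_mem hn hm),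
    hN _ (N.add_mem hn (N.smul_mem _ hm)), hN _ (N.sub_mem hn (N.smul_mem _ hm))]
  simp

lemma IsNeutral.le_kOrth_sup {J : H →L[ℂ] H} {R N : Submodule ℂ H} (hN : IsNeutral J N)
    (hRN : AreKOrth J R N) : N ≤ kOrth J (R ⊔ N) := by
  intro n hn x hx
  obtain ⟨r, hr, m, hm, rfl⟩ := Submodule.mem_sup.mp hx
  rw [map_add, inner_add_left, hRN r hr n hn, hN.inner_eq_zero hm hn, add_zero]

variable [CompleteSpace H]

lemma IsRegular.isTopCompl {J : H →L[ℂ] H} {R : Submodule ℂ H} (hR : IsRegular J R) :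
    (kOrth J R).IsTopCompl R :=
  have hcompl : IsCompl R (kOrth J R) := ⟨disjoint_iff.mpr hR.2.1, codisjoint_iff.mpr hR.2.2⟩
  Submodule.IsCompl.isTopCompl_of_isClosed hcompl.symm (isClosed_kOrth J R) hR.1

theorem qpr_sum_orth_closed_general (J : H →L[ℂ] H)
    (S : Submodule ℂ H) (hS : IsQpr J S) :
    IsClosed ((S ⊔ kOrth J S : Submodule ℂ H) : Set H) := by
  obtain ⟨-, R, N, hR, hN, hRN, rfl⟩ := hS
  have hsup : R ⊔ N ⊔ kOrth J (R ⊔ N) = R ⊔ kOrth J (R ⊔ N) := by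
    rw [sup_assoc, sup_eq_right.mpr (hN.le_kOrth_sup hRN)]
  rw [hsup]
  exact hR.isTopCompl.isClosed_sup_of_le (isClosed_kOrth J _) (kOrth_le J le_sup_left)

/-- if `S` is quasi-pseudo-regular then `S + S^⊥` is closed. -/
theorem qpr_sum_orth_closed (J : H →L[ℂ] H) (hJ : IsFundSym J)
    (S : Submodule ℂ H) (hS : IsQpr J S) :
    IsClosed ((S ⊔ kOrth J S : Submodule ℂ H) : Set H) :=
  qpr_sum_orth_closed_general J S hS

end KreinPaper
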